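/- Let p be a prime and let G = C_{p^{n_1}} × ⋯ × C_{p^{n_r}} be a finite abelian p-group, where the i-th factor is cyclic of order p^{n_i} with generator g_i (n_i ≥ 1). Let G̃ = ∑_{g ∈ G} g and let (G̃) be the ideal of F_p[G] generated by G̃. Then the tensor product (G̃) ⊗_{F_p[G]} Ω_{F_p[G]/F_p} is an F_p-vector space of dimension r, with basis given by the r elements G̃ ⊗ dg_i for 1 ≤ i ≤ r. -/

import Mathlib

open TensorProduct

/-- The finite abelian `p`-group `G = C_{p^{n_1}} × ⋯ × C_{p^{n_r}}`. -/
abbrev PGroup (p r : ℕ) (n : Fin r → ℕ) : Type :=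
  (i : Fin r) → Multiplicative (ZMod (p ^ n i))

/-- The generator `g_i` of the `i`-th cyclic factor of `G`. -/
noncomputable def pGen (p r : ℕ) (n : Fin r → ℕ) (i : Fin r) : PGroup p r n :=
  Pi.mulSingle i (Multiplicative.ofAdd 1)

/-- The sum `G̃ = ∑_{g ∈ G} g` of all group elements in the group algebra `F_p[G]`. -/
noncomputable def gTilde (p : ℕ) [Fact p.Prime] (r : ℕ) (n : Fin r → ℕ) :
    MonoidAlgebra (ZMod p) (PGroup p r n) :=
  ∑ g : PGroup p r n, MonoidAlgebra.of (ZMod p) (PGroup p r n) g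

/-!
The group `G` acts trivially on the ideal `(G̃) = F_p · G̃`, hence on `(G̃) ⊗ Ω`. So the
`F_p`-span of the elements `G̃ ⊗ dg` is already an `F_p[G]`-submodule, hence everything; and
since `G̃ ⊗ d(gh) = G̃ ⊗ dg + G̃ ⊗ dh`, the `G̃ ⊗ dg_i` suffice. For independence, an additive
character `χ : G → F_p` gives the derivation `g ↦ χ(g) g` of `F_p[G]`, hence a functional on
`(G̃) ⊗ Ω` sending `G̃ ⊗ dg` to `χ(g)`; the reductions mod `p` of the coordinates of `G` are
characters dual to the generators `g_i`.
-/

theorem Ideal.span_singleton_tmul_surjective {R M : Type*} [CommSemiring R] [AddCommMonoid M]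
    [Module R M] (a : R) :
    Function.Surjective (TensorProduct.mk R (Ideal.span {a}) M ⟨a, Ideal.subset_span rfl⟩) := by
  intro x
  induction x using TensorProduct.induction_on with
  | zero => exact ⟨0, tmul_zero _ _⟩
  | tmul y m =>
    obtain ⟨c, hc⟩ := Ideal.mem_span_singleton'.mp y.2
    refine ⟨c • m, ?_⟩
    rw [TensorProduct.mk_apply, ← smul_tmul]
    congr 1
    exact Subtype.ext hc
  | add x y hx hy =>
    obtain ⟨m, rfl⟩ := hx
    obtain ⟨m', rfl⟩ := hy
    exact ⟨m + m', map_add _ _ _⟩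

namespace MonoidAlgebra

variable {k G : Type*}

variable (k G) in
noncomputable def normElement [Semiring k] [Monoid G] [Fintype G] : k[G] :=
  ∑ g, of k G g

theorem of_mul_normElement [Semiring k] [Group G] [Fintype G] (g : G) :
    of k G g * normElement k G = normElement k G := by
  rw [normElement, Finset.mul_sum]
  simp only [← map_mul]
  exact Fintype.sum_equiv (Equiv.mulLeft g) _ _ fun _ => rfl

theorem coord_one_normElement [Semiring k] [Monoid G] [Fintype G] :
    (basis G k).coord 1 (normElement k G) = 1 := by
  classical
  have : normElement k G = ∑ g, basis G k g := by
    simp [normElement, of_apply]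
  simp only [this, map_sum, Module.Basis.coord_apply, Module.Basis.repr_self,
    Finsupp.single_apply, Finset.sum_ite_eq', Finset.mem_univ, if_true]

theorem restrictScalars_span_eq_span_of_forall_of_smul [CommSemiring k] [Monoid G] {V : Type*}
    [AddCommMonoid V] [Module k V] [Module k[G] V] [IsScalarTower k k[G] V]
    (h : ∀ (g : G) (v : V), of k G g • v = v) (s : Set V) :
    (Submodule.span k[G] s).restrictScalars k = Submodule.span k s := by
  refine le_antisymm ?_ (Submodule.span_le_restrictScalars k k[G] s)
  let W := submoduleOfSMulMem (Submodule.span k s) fun g v hv => (h g v).symm ▸ hv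
  exact Submodule.span_le (p := W) |>.mpr Submodule.subset_span

section Derivation

variable [CommSemiring k] [CommMonoid G]

noncomputable def gradingDerivation (χ : G →* Multiplicative k) : Derivation k k[G] k[G] where
  toLinearMap := (basis G k).constr k fun g => (χ g).toAdd • basis G k g
  map_one_eq_zero' := by
    rw [one_def, ← basis_apply, Module.Basis.constr_basis, map_one, toAdd_one, zero_smul]
  leibniz' a b := by
    set δ := (basis G k).constr k fun g => (χ g).toAdd • basis G k g
    suffices (LinearMap.mul k k[G]).compr₂ δ =
        (LinearMap.mul k k[G]).compl₂ δ + ((LinearMap.mul k k[G]).compl₂ δ).flip by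
      simpa [smul_eq_mul, mul_comm b] using congr($this a b)
    refine (basis G k).ext fun g => (basis G k).ext fun h => ?_
    have hgh : basis G k g * basis G k h =
        basis G k (g * h) :=
      (map_mul (of k G) g h).symm
    simp only [LinearMap.add_apply, LinearMap.flip_apply, LinearMap.compr₂_apply,
      LinearMap.compl₂_apply, LinearMap.mul_apply', hgh, δ, Module.Basis.constr_basis]
    rw [mul_smul_comm, mul_smul_comm, mul_comm (basis G k h), hgh, map_mul, toAdd_mul, add_smul,
      add_comm]

theorem gradingDerivation_of (χ : G →* Multiplicative k) (g : G) :
    gradingDerivation χ (of k G g) = (χ g).toAdd • of k G g :=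
  (basis G k).constr_basis k _ g

end Derivation

section Tensor

variable [CommRing k] [CommGroup G] [Fintype G]

variable (k G) in
noncomputable abbrev normIdeal : Ideal k[G] := Ideal.span {normElement k G}

variable (k G) in
noncomputable def normIdealGen : normIdeal k G := ⟨normElement k G, Ideal.subset_span rfl⟩

theorem of_mul_eq_self_of_mem_normIdeal {y : k[G]} (hy : y ∈ normIdeal k G)
    (g : G) : of k G g * y = y := by
  obtain ⟨a, rfl⟩ := Ideal.mem_span_singleton'.mp hy
  rw [mul_left_comm, of_mul_normElement]

theorem of_smul_eq_self_of_normIdeal_tensor {M : Type*} [AddCommGroup M] [Module k[G] M] (g : G)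
    (x : normIdeal k G ⊗[k[G]] M) : of k G g • x = x := by
  induction x using TensorProduct.induction_on with
  | zero => exact smul_zero _
  | tmul y m =>
    rw [smul_tmul']
    congr 1
    exact Subtype.ext (of_mul_eq_self_of_mem_normIdeal y.2 g)
  | add x y hx hy => rw [smul_add, hx, hy]

theorem normIdealGen_tmul_D_of_mul (g h : G) :
    normIdealGen k G ⊗ₜ[k[G]] KaehlerDifferential.D k k[G] (of k G (g * h)) =
      normIdealGen k G ⊗ₜ KaehlerDifferential.D k k[G] (of k G g) +
        normIdealGen k G ⊗ₜ KaehlerDifferential.D k k[G] (of k G h) := by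
  rw [map_mul, Derivation.leibniz, tmul_add, tmul_smul, tmul_smul,
    of_smul_eq_self_of_normIdeal_tensor, of_smul_eq_self_of_normIdeal_tensor, add_comm]

theorem span_range_normIdealGen_tmul_D_of {ι : Type*} (g : ι → G)
    (hg : Submonoid.closure (Set.range g) = ⊤) :
    Submodule.span k (Set.range fun i =>
      normIdealGen k G ⊗ₜ[k[G]] KaehlerDifferential.D k k[G] (of k G (g i))) = ⊤ := by
  set μ := TensorProduct.mk k[G] (normIdeal k G) Ω[k[G]⁄k] (normIdealGen k G)
  have hμ : Function.Surjective μ := Ideal.span_singleton_tmul_surjective _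
  have hD : Submodule.span k (Set.range (μ ∘ KaehlerDifferential.D k k[G])) = ⊤ := by
    rw [← restrictScalars_span_eq_span_of_forall_of_smul of_smul_eq_self_of_normIdeal_tensor,
      Set.range_comp, ← Submodule.map_span, KaehlerDifferential.span_range_derivation,
      Submodule.map_top, LinearMap.range_eq_top.mpr hμ, Submodule.restrictScalars_top]
  have hof : Submodule.span k (Set.range (μ ∘ KaehlerDifferential.D k k[G] ∘ of k G)) = ⊤ := by
    let F := μ.restrictScalars k ∘ₗ (KaehlerDifferential.D k k[G]).toLinearMap
    rw [eq_top_iff, ← hD, Submodule.span_le]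
    rintro _ ⟨a, rfl⟩
    have ha : a ∈ Submodule.span k (Set.range (of k G)) := (basis G k).span_eq ▸ trivial
    have := Submodule.mem_map_of_mem (f := F) ha
    rwa [Submodule.map_span, ← Set.range_comp] at this
  rw [eq_top_iff, ← hof, Submodule.span_le]
  rintro _ ⟨h, rfl⟩
  have : h ∈ Submonoid.closure (Set.range g) := hg ▸ trivial
  induction this using Submonoid.closure_induction with
  | mem x hx =>
    obtain ⟨i, rfl⟩ := hx
    exact Submodule.subset_span ⟨i, rfl⟩
  | one =>
    rw [Function.comp_apply, Function.comp_apply, map_one, Derivation.map_one_eq_zero, map_zero]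
    exact zero_mem _
  | mul x y _ _ hx hy =>
    simp only [μ, Function.comp_apply, TensorProduct.mk_apply] at hx hy ⊢
    rw [normIdealGen_tmul_D_of_mul]
    exact add_mem hx hy

theorem linearIndependent_normIdealGen_tmul_D_of {ι : Type*} [DecidableEq ι]
    (χ : ι → G →* Multiplicative k) (g : ι → G)
    (hχ : ∀ i j, (χ i (g j)).toAdd = (Pi.single j 1 : ι → k) i) :
    LinearIndependent k fun j =>
      normIdealGen k G ⊗ₜ[k[G]] KaehlerDifferential.D k k[G] (of k G (g j)) := by
  let Φ : normIdeal k G ⊗[k[G]] Ω[k[G]⁄k] →ₗ[k] ι → k :=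
    LinearMap.pi fun i => (basis G k).coord 1 ∘ₗ
      (LinearMap.mul' k[G] k[G] ∘ₗ TensorProduct.map (normIdeal k G).subtype
        (gradingDerivation (χ i)).liftKaehlerDifferential).restrictScalars k
  refine LinearIndependent.of_comp Φ ?_
  convert Pi.linearIndependent_single_one ι k with j
  ext i
  simp only [Φ, Function.comp_apply, LinearMap.pi_apply, LinearMap.comp_apply,
    LinearMap.restrictScalars_apply, TensorProduct.map_tmul, Submodule.subtype_apply,
    Derivation.liftKaehlerDifferential_comp_D, LinearMap.mul'_apply, gradingDerivation_of,
    normIdealGen, mul_smul_comm, mul_comm _ (of k G _), of_mul_normElement, map_smul, coord_one_normElement, smul_eq_mul, mul_one, hχ]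

end Tensor

end MonoidAlgebra

namespace PGroup

variable {p r : ℕ} {n : Fin r → ℕ}

theorem prod_pGen_pow_val [NeZero p] (g : PGroup p r n) :
    ∏ i, pGen p r n i ^ (g i).toAdd.val = g := by
  conv_rhs => rw [← Finset.univ_prod_mulSingle g]
  refine Finset.prod_congr rfl fun i _ => ?_
  rw [pGen, ← Pi.mulSingle_pow, ← ofAdd_nsmul, nsmul_one, ZMod.natCast_zmod_val, ofAdd_toAdd]

theorem closure_range_pGen [NeZero p] : Submonoid.closure (Set.range (pGen p r n)) = ⊤ := by
  refine eq_top_iff.mpr fun g _ => ?_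
  rw [← prod_pGen_pow_val g]
  exact Submonoid.prod_mem _ fun i _ =>
    Submonoid.pow_mem _ (Submonoid.subset_closure (Set.mem_range_self i)) _

variable (p) in
noncomputable def coordModP (i : Fin r) (hi : 1 ≤ n i) : PGroup p r n →* Multiplicative (ZMod p) :=
  (ZMod.castHom (dvd_pow_self p (Nat.one_le_iff_ne_zero.mp hi)) (ZMod p)).toAddMonoidHom
    |>.toMultiplicative.comp (Pi.evalMonoidHom _ i)

theorem toAdd_coordModP_pGen {i : Fin r} (hi : 1 ≤ n i) (j : Fin r) :
    (coordModP p i hi (pGen p r n j)).toAdd = (Pi.single j 1 : Fin r → ZMod p) i := by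
  rcases eq_or_ne i j with rfl | hij
  · simp only [coordModP, MonoidHom.comp_apply, Pi.evalMonoidHom_apply, pGen, Pi.mulSingle_eq_same,
      AddMonoidHom.toMultiplicative_apply_apply, toAdd_ofAdd, RingHom.toAddMonoidHom_eq_coe,
      AddMonoidHom.coe_coe, map_one, Pi.single_eq_same]
  · simp only [coordModP, MonoidHom.comp_apply, Pi.evalMonoidHom_apply, pGen,
      Pi.mulSingle_eq_of_ne hij, map_one, toAdd_one, Pi.single_eq_of_ne hij]

end PGroup

/-- With `(G̃)` the ideal of `F_p[G]` generated by `G̃ = ∑_{g ∈ G} g`, the tensor product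
`(G̃) ⊗_{F_p[G]} Ω_{F_p[G]/F_p}` is an `F_p`-vector space of dimension `r`, with basis
given by the elements `G̃ ⊗ dg_i` for `1 ≤ i ≤ r`. -/
theorem gTilde_tensor_kaehler_basis (p : ℕ) [Fact p.Prime] (r : ℕ) (n : Fin r → ℕ)
    (hn : ∀ i, 1 ≤ n i) :
    ∃ b : Module.Basis (Fin r) (ZMod p)
        ((Ideal.span {gTilde p r n} : Ideal (MonoidAlgebra (ZMod p) (PGroup p r n)))
          ⊗[MonoidAlgebra (ZMod p) (PGroup p r n)]
            (Ω[MonoidAlgebra (ZMod p) (PGroup p r n)⁄ZMod p])),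
      ∀ i : Fin r,
        b i = (⟨gTilde p r n, Ideal.subset_span rfl⟩ :
            (Ideal.span {gTilde p r n} : Ideal (MonoidAlgebra (ZMod p) (PGroup p r n)))) ⊗ₜ
          KaehlerDifferential.D (ZMod p) (MonoidAlgebra (ZMod p) (PGroup p r n))
            (MonoidAlgebra.of (ZMod p) (PGroup p r n) (pGen p r n i)) :=
  ⟨Module.Basis.mk
      (MonoidAlgebra.linearIndependent_normIdealGen_tmul_D_of
        (fun i => PGroup.coordModP p i (hn i)) (pGen p r n)
        fun i j => PGroup.toAdd_coordModP_pGen (hn i) j)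
      (MonoidAlgebra.span_range_normIdealGen_tmul_D_of (pGen p r n)
        PGroup.closure_range_pGen).ge,
    Module.Basis.mk_apply _ _⟩
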